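/- Let V = {(1,4), (2,2), (3,6), (4,1), (5,5), (6,3)} ⊂ ℝ². Any set of axis-parallel lines that hits every segment between distinct points of V (without passing through any point of V) contains at least 3 lines. -/
import Mathlib


open scoped Classical

/-- An axis-parallel line in the plane: `vert a` is the line `x = a`,
`horiz b` is the line `y = b`. -/
inductive ALine where
  | vert : ℝ → ALine
  | horiz : ℝ → ALine

/-- `a` lies strictly between `u` and `v`. -/
def strictBetween (a u v : ℝ) : Prop := (u < a ∧ a < v) ∨ (v < a ∧ a < u)

/-- An axis-parallel line hits the segment joining `p` and `q` iff it meets the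
relative interior of the segment but neither endpoint. -/
def ALine.hits : ALine → ℝ × ℝ → ℝ × ℝ → Prop
  | .vert a, p, q => strictBetween a p.1 q.1
  | .horiz b, p, q => strictBetween b p.2 q.2

/-- The line contains the point `p`. -/
def ALine.containsPt : ALine → ℝ × ℝ → Prop
  | .vert a, p => p.1 = a
  | .horiz b, p => p.2 = b

/-- The line is vertical. -/
def ALine.isVert : ALine → Prop
  | .vert _ => True
  | .horiz _ => False

/-- The line is horizontal. -/
def ALine.isHoriz : ALine → Prop
  | .vert _ => False
  | .horiz _ => True

/-- Two layouts (assignments of centers to the items indexed by `ι`) have the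
same orthogonal order. -/
def orthOrder {ι : Type*} (f g : ι → ℝ × ℝ) : Prop :=
  ∀ i j : ι,
    ((f i).1 < (f j).1 ↔ (g i).1 < (g j).1) ∧
    ((f i).1 = (f j).1 ↔ (g i).1 = (g j).1) ∧
    ((f i).2 < (f j).2 ↔ (g i).2 < (g j).2) ∧
    ((f i).2 = (f j).2 ↔ (g i).2 = (g j).2)

/-- A layout of unit squares is disjoint iff any two distinct centers are at
distance at least 1 in the `x`- or the `y`-coordinate. -/
def disjointUnitLayout {ι : Type*} (f : ι → ℝ × ℝ) : Prop :=
  ∀ i j : ι, i ≠ j → 1 ≤ |(f i).1 - (f j).1| ∨ 1 ≤ |(f i).2 - (f j).2|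

/-- Width of the bounding box of a layout of unit squares. -/
noncomputable def unitWidth {n : ℕ} (f : Fin n → ℝ × ℝ) : ℝ :=
  (⨆ i, (f i).1) - (⨅ i, (f i).1) + 1

/-- Height of the bounding box of a layout of unit squares. -/
noncomputable def unitHeight {n : ℕ} (f : Fin n → ℝ × ℝ) : ℝ :=
  (⨆ i, (f i).2) - (⨅ i, (f i).2) + 1

/-- Side of a point with respect to an axis-parallel line. -/
noncomputable def sgn : ALine → ℝ × ℝ → Bool
  | .vert a, p => decide (p.1 < a)
  | .horiz b, p => decide (p.2 < b)

/-- at least 3 axis-parallel lines are needed to hit all segments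
induced by the six points `{(1,4),(2,2),(3,6),(4,1),(5,5),(6,3)}`. -/
theorem stmt7 (L : Finset ALine)
    (V : Finset (ℝ × ℝ))
    (hV : V = {(1,4), (2,2), (3,6), (4,1), (5,5), (6,3)})
    (havoid : ∀ l ∈ L, ∀ p ∈ V, ¬ l.containsPt p)
    (hhit : ∀ p ∈ V, ∀ q ∈ V, p ≠ q → ∃ l ∈ L, l.hits p q) :
    3 ≤ L.card := by
  classical
  have hsep : ∀ p ∈ V, ∀ q ∈ V, p ≠ q →
      ∃ l ∈ L, sgn l p ≠ sgn l q := by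
    intro p hp q hq hpq
    obtain ⟨l, hl, hh⟩ := hhit p hp q hq hpq
    refine ⟨l, hl, fun h => ?_⟩
    cases l with
    | vert a =>
        have h' : p.1 < a ↔ q.1 < a := by simpa [sgn, decide_eq_decide] using h
        rcases hh with ⟨h1, h2⟩ | ⟨h1, h2⟩
        · exact absurd (h'.mp h1) (by linarith)
        · exact absurd (h'.mpr h1) (by linarith)
    | horiz b =>
        have h' : p.2 < b ↔ q.2 < b := by simpa [sgn, decide_eq_decide] using h
        rcases hh with ⟨h1, h2⟩ | ⟨h1, h2⟩
        · exact absurd (h'.mp h1) (by linarith)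
        · exact absurd (h'.mpr h1) (by linarith)
  have hinj : Function.Injective (fun p : ↥V => fun l : ↥L => sgn l.1 p.1) := by
    intro p q heq
    by_contra hpq
    obtain ⟨l, hl, hne⟩ := hsep p.1 p.2 q.1 q.2 (fun h => hpq (Subtype.ext h))
    exact hne (congrFun heq ⟨l, hl⟩)
  have hle := Fintype.card_le_of_injective _ hinj
  have hVcard : V.card = 6 := by
    rw [hV]
    rw [show ((6:ℝ),(3:ℝ)) = ((6:ℝ),(3:ℝ)) from rfl]
    repeat rw [Finset.card_insert_of_not_mem (by norm_num [Prod.ext_iff])]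
    simp
  rw [Fintype.card_fun, Fintype.card_coe, Fintype.card_coe, hVcard,
    Fintype.card_bool] at hle
  by_contra hc
  push_neg at hc
  interval_cases h : L.card <;> omega
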